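/- A pair (d, D) of linear maps on V is a biderivation of the Leibniz algebra L₁₈ if and only if there exist complex numbers a, b, m, p, q, r, s, u, v, w, z such that d(e₁) = a·e₁ + p·e₃ + q·e₄, d(e₂) = m·e₁ + b·e₂ + r·e₃ + s·e₄, d(e₃) = (a+b)·e₃, d(e₄) = 2b·e₄, D(e₁) = a·e₁ + u·e₃ + v·e₄, D(e₂) = m·e₁ + b·e₂ + w·e₃ + z·e₄, D(e₃) = (a+b)·e₃, and D(e₄) = 0. Consequently, the space of biderivations of L₁₈ is an 11-dimensional linear subspace of End(V) × End(V). -/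

import Mathlib

/-- `V = ℂ⁴`. -/
abbrev V : Type := Fin 4 → ℂ

/-- standard basis: `e 0 = e₁`, ..., `e 3 = e₄`. -/
def e (i : Fin 4) : V := Pi.single i 1

/-- Bracket of the Leibniz algebra `L₁₈`:
`⟦e₁,e₂⟧ = e₃`, `⟦e₂,e₁⟧ = -e₃`, `⟦e₂,e₂⟧ = e₄`, all other basis products zero. -/
def br (x y : V) : V :=
  (x 0 * y 1 - x 1 * y 0) • e 2 + (x 1 * y 1) • e 3

/-- A derivation. -/
def IsDer (d : V →ₗ[ℂ] V) : Prop :=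
  ∀ x y : V, d (br x y) = br (d x) y + br x (d y)

/-- An antiderivation. -/
def IsAntiDer (D : V →ₗ[ℂ] V) : Prop :=
  ∀ x y : V, D (br x y) = br x (D y) - br y (D x)

/-- A biderivation: a pair of a derivation and an antiderivation satisfying
`⟦d(x),y⟧ = ⟦D(x),y⟧` for all `x, y`. -/
def IsBider (d D : V →ₗ[ℂ] V) : Prop :=
  IsDer d ∧ IsAntiDer D ∧ ∀ x y : V, br (d x) y = br (D x) y



lemma e_apply (i j : Fin 4) : e i j = if j = i then 1 else 0 := by
  simp [e, Pi.single_apply]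

lemma br_apply_0 (x y : V) : br x y 0 = 0 := by simp [br, e_apply]
lemma br_apply_1 (x y : V) : br x y 1 = 0 := by simp [br, e_apply]
lemma br_apply_2 (x y : V) : br x y 2 = x 0 * y 1 - x 1 * y 0 := by simp [br, e_apply]
lemma br_apply_3 (x y : V) : br x y 3 = x 1 * y 1 := by simp [br, e_apply]

lemma br_eq (x y : V) : br x y = (x 0 * y 1 - x 1 * y 0) • e 2 + (x 1 * y 1) • e 3 := rfl

lemma apply_coords (f : V →ₗ[ℂ] V) (x : V) :
    f x = x 0 • f (e 0) + x 1 • f (e 1) + x 2 • f (e 2) + x 3 • f (e 3) := by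
  have hx : x = x 0 • e 0 + x 1 • e 1 + x 2 • e 2 + x 3 • e 3 := by
    funext i; fin_cases i <;> simp [e_apply]
  conv_lhs => rw [hx]
  simp [map_add, map_smul]


lemma bider_of_params (d D : V →ₗ[ℂ] V) (a b m p q r s u v w z : ℂ)
    (hd0 : d (e 0) = a • e 0 + p • e 2 + q • e 3)
    (hd1 : d (e 1) = m • e 0 + b • e 1 + r • e 2 + s • e 3)
    (hd2 : d (e 2) = (a + b) • e 2)
    (hd3 : d (e 3) = (2 * b) • e 3)
    (hD0 : D (e 0) = a • e 0 + u • e 2 + v • e 3)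
    (hD1 : D (e 1) = m • e 0 + b • e 1 + w • e 2 + z • e 3)
    (hD2 : D (e 2) = (a + b) • e 2)
    (hD3 : D (e 3) = 0) :
    IsDer d ∧ IsAntiDer D ∧ ∀ x y : V, br (d x) y = br (D x) y := by
  have hdx0 : ∀ x : V, d x 0 = a * x 0 + m * x 1 := by
    intro x; rw [apply_coords d x]
    simp [hd0, hd1, hd2, hd3, e_apply]; ring
  have hdx1 : ∀ x : V, d x 1 = b * x 1 := by
    intro x; rw [apply_coords d x]
    simp [hd0, hd1, hd2, hd3, e_apply]; ring
  have hDx0 : ∀ x : V, D x 0 = a * x 0 + m * x 1 := by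
    intro x; rw [apply_coords D x]
    simp [hD0, hD1, hD2, hD3, e_apply]; ring
  have hDx1 : ∀ x : V, D x 1 = b * x 1 := by
    intro x; rw [apply_coords D x]
    simp [hD0, hD1, hD2, hD3, e_apply]; ring
  refine ⟨?_, ?_, ?_⟩
  · intro x y
    have L : d (br x y) = (x 0 * y 1 - x 1 * y 0) • d (e 2) + (x 1 * y 1) • d (e 3) := by
      rw [br_eq]; simp
    funext i
    fin_cases i <;>
      simp [L, hd2, hd3, br_apply_0, br_apply_1, br_apply_2, br_apply_3, e_apply,
        hdx0, hdx1] <;> ring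
  · intro x y
    have L : D (br x y) = (x 0 * y 1 - x 1 * y 0) • D (e 2) + (x 1 * y 1) • D (e 3) := by
      rw [br_eq]; simp
    funext i
    fin_cases i <;>
      simp [L, hD2, hD3, br_apply_0, br_apply_1, br_apply_2, br_apply_3, e_apply,
        hDx0, hDx1] <;> ring
  · intro x y
    funext i
    fin_cases i <;>
      simp [br_apply_0, br_apply_1, br_apply_2, br_apply_3, hdx0, hdx1, hDx0, hDx1]
lemma b01 : br (e 0) (e 1) = e 2 := by
  funext i; fin_cases i <;> simp [br, e_apply]
lemma b11 : br (e 1) (e 1) = e 3 := by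
  funext i; fin_cases i <;> simp [br, e_apply]
lemma b10 : br (e 1) (e 0) = -(e 2) := by
  funext i; fin_cases i <;> simp [br, e_apply]

lemma params_of_bider (d D : V →ₗ[ℂ] V) (h : IsBider d D) :
    ∃ a b m p q r s u v w z : ℂ,
      d (e 0) = a • e 0 + p • e 2 + q • e 3 ∧
      d (e 1) = m • e 0 + b • e 1 + r • e 2 + s • e 3 ∧
      d (e 2) = (a + b) • e 2 ∧
      d (e 3) = (2 * b) • e 3 ∧
      D (e 0) = a • e 0 + u • e 2 + v • e 3 ∧
      D (e 1) = m • e 0 + b • e 1 + w • e 2 + z • e 3 ∧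
      D (e 2) = (a + b) • e 2 ∧
      D (e 3) = 0 := by
  obtain ⟨hd, hD, hc⟩ := h
  have h1 := hd (e 0) (e 1); rw [b01] at h1
  have h2 := hd (e 1) (e 0); rw [b10, map_neg] at h2
  have h3 := hd (e 1) (e 1); rw [b11] at h3
  have g1 := hD (e 0) (e 1); rw [b01] at g1
  have g3 := hD (e 1) (e 1); rw [b11] at g3
  have c1 := hc (e 0) (e 1)
  have c2 := hc (e 1) (e 1)
  have E0 := congrFun h1 0
  have E1 := congrFun h1 1
  have E2 := congrFun h1 2
  have A3 := congrFun h1 3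
  have B3 := congrFun h2 3
  have F0 := congrFun h3 0
  have F1 := congrFun h3 1
  have F2 := congrFun h3 2
  have F3 := congrFun h3 3
  have G0 := congrFun g1 0
  have G1 := congrFun g1 1
  have G2 := congrFun g1 2
  have G3 := congrFun g1 3
  have H0 := congrFun g3 0
  have H1 := congrFun g3 1
  have H2 := congrFun g3 2
  have H3 := congrFun g3 3
  simp only [br_apply_0, br_apply_1, br_apply_2, br_apply_3, Pi.add_apply, Pi.sub_apply,
    Pi.neg_apply, e_apply, reduceIte, Fin.reduceEq, mul_one, mul_zero, one_mul, zero_mul,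
    sub_zero, zero_sub, add_zero, zero_add, sub_self, neg_zero, neg_neg]
    at E0 E1 E2 A3 B3 F0 F1 F2 F3 G0 G1 G2 G3 H0 H1 H2 H3
  have key : d (e 0) 1 = 0 := by linear_combination -(A3 + B3) / 2
  have c12 := congrFun c1 2
  have c13 := congrFun c1 3
  have c22 := congrFun c2 2
  have c23 := congrFun c2 3
  simp only [br_apply_2, br_apply_3, e_apply, reduceIte, Fin.reduceEq, mul_one, mul_zero,
    sub_zero, one_mul] at c12 c13 c22 c23
  refine ⟨d (e 0) 0, d (e 1) 1, d (e 1) 0, d (e 0) 2, d (e 0) 3, d (e 1) 2, d (e 1) 3,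
    D (e 0) 2, D (e 0) 3, D (e 1) 2, D (e 1) 3, ?_, ?_, ?_, ?_, ?_, ?_, ?_, ?_⟩
  · funext i; fin_cases i <;> simp [e_apply, key]
  · funext i; fin_cases i <;> simp [e_apply]
  · funext i; fin_cases i <;> simp [e_apply, E0, E1, E2, A3, key] <;> ring
  · funext i; fin_cases i <;> simp [e_apply, F0, F1, F2, F3] <;> ring
  · funext i; fin_cases i <;> simp [e_apply, ← c12, ← c13, key]
  · funext i; fin_cases i <;> simp [e_apply, ← c22, ← c23]
  · funext i;
    fin_cases i <;>
      simp [e_apply, G0, G1, G2, G3, ← c12, ← c13, ← c22, ← c23, key] <;> ring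
  · funext i; fin_cases i <;> simp [e_apply, H0, H1, H2, H3]
-- bilinearity of br
lemma br_add_left (x y z : V) : br (x + y) z = br x z + br y z := by
  funext i; fin_cases i <;> simp [br, e_apply] <;> ring
lemma br_add_right (x y z : V) : br x (y + z) = br x y + br x z := by
  funext i; fin_cases i <;> simp [br, e_apply] <;> ring
lemma br_smul_left (c : ℂ) (x z : V) : br (c • x) z = c • br x z := by
  funext i; fin_cases i <;> simp [br, e_apply] <;> ring
lemma br_smul_right (c : ℂ) (x z : V) : br x (c • z) = c • br x z := by
  funext i; fin_cases i <;> simp [br, e_apply] <;> ring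

lemma bider_add {d1 D1 d2 D2 : V →ₗ[ℂ] V} (h1 : IsBider d1 D1) (h2 : IsBider d2 D2) :
    IsBider (d1 + d2) (D1 + D2) := by
  obtain ⟨hd1, hD1, hc1⟩ := h1
  obtain ⟨hd2, hD2, hc2⟩ := h2
  refine ⟨fun x y => ?_, fun x y => ?_, fun x y => ?_⟩
  · simp only [LinearMap.add_apply, hd1 x y, hd2 x y, br_add_left, br_add_right]; abel
  · simp only [LinearMap.add_apply, hD1 x y, hD2 x y, br_add_left, br_add_right]; abel
  · simp only [LinearMap.add_apply, br_add_left, hc1 x y, hc2 x y]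

lemma bider_smul (c : ℂ) {d1 D1 : V →ₗ[ℂ] V} (h1 : IsBider d1 D1) :
    IsBider (c • d1) (c • D1) := by
  obtain ⟨hd1, hD1, hc1⟩ := h1
  refine ⟨fun x y => ?_, fun x y => ?_, fun x y => ?_⟩
  · simp only [LinearMap.smul_apply, hd1 x y, br_smul_left, br_smul_right, smul_add]
  · simp only [LinearMap.smul_apply, hD1 x y, br_smul_left, br_smul_right, smul_sub]
  · simp only [LinearMap.smul_apply, br_smul_left, hc1 x y]

lemma bider_zero : IsBider (0 : V →ₗ[ℂ] V) 0 := by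
  refine ⟨fun x y => ?_, fun x y => ?_, fun x y => ?_⟩ <;>
    funext i <;> fin_cases i <;> simp [br, e_apply]

noncomputable def B : Module.Basis (Fin 4) ℂ V := Pi.basisFun ℂ (Fin 4)

lemma B_eq (i : Fin 4) : B i = e i := by
  simp [B, e]

noncomputable def mk4 (v : Fin 4 → V) : V →ₗ[ℂ] V := B.constr ℂ v

lemma mk4_apply (v : Fin 4 → V) (i : Fin 4) : mk4 v (e i) = v i := by
  rw [← B_eq, mk4, Module.Basis.constr_basis]

lemma bider_of_vec (dv Dv : Fin 4 → V) (a b m p q r s u v w z : ℂ)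
    (hd0 : dv 0 = a • e 0 + p • e 2 + q • e 3)
    (hd1 : dv 1 = m • e 0 + b • e 1 + r • e 2 + s • e 3)
    (hd2 : dv 2 = (a + b) • e 2)
    (hd3 : dv 3 = (2 * b) • e 3)
    (hD0 : Dv 0 = a • e 0 + u • e 2 + v • e 3)
    (hD1 : Dv 1 = m • e 0 + b • e 1 + w • e 2 + z • e 3)
    (hD2 : Dv 2 = (a + b) • e 2)
    (hD3 : Dv 3 = 0) :
    IsBider (mk4 dv) (mk4 Dv) :=
  bider_of_params _ _ a b m p q r s u v w z
    (by rw [mk4_apply, hd0]) (by rw [mk4_apply, hd1]) (by rw [mk4_apply, hd2])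
    (by rw [mk4_apply, hd3]) (by rw [mk4_apply, hD0]) (by rw [mk4_apply, hD1])
    (by rw [mk4_apply, hD2]) (by rw [mk4_apply, hD3])

noncomputable def f : Fin 11 → (V →ₗ[ℂ] V) × (V →ₗ[ℂ] V) :=
  ![ (mk4 ![e 0, 0, e 2, 0], mk4 ![e 0, 0, e 2, 0]),
     (mk4 ![0, e 1, e 2, (2:ℂ) • e 3], mk4 ![0, e 1, e 2, 0]),
     (mk4 ![0, e 0, 0, 0], mk4 ![0, e 0, 0, 0]),
     (mk4 ![e 2, 0, 0, 0], mk4 ![0, 0, 0, 0]),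
     (mk4 ![e 3, 0, 0, 0], mk4 ![0, 0, 0, 0]),
     (mk4 ![0, e 2, 0, 0], mk4 ![0, 0, 0, 0]),
     (mk4 ![0, e 3, 0, 0], mk4 ![0, 0, 0, 0]),
     (mk4 ![0, 0, 0, 0], mk4 ![e 2, 0, 0, 0]),
     (mk4 ![0, 0, 0, 0], mk4 ![e 3, 0, 0, 0]),
     (mk4 ![0, 0, 0, 0], mk4 ![0, e 2, 0, 0]),
     (mk4 ![0, 0, 0, 0], mk4 ![0, e 3, 0, 0]) ]

lemma f_bider (i : Fin 11) : IsBider (f i).1 (f i).2 := by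
  fin_cases i
  · exact bider_of_vec _ _ 1 0 0 0 0 0 0 0 0 0 0
      (by simp) (by simp) (by simp) (by simp) (by simp) (by simp) (by simp) (by simp)
  · exact bider_of_vec _ _ 0 1 0 0 0 0 0 0 0 0 0
      (by simp) (by simp) (by simp) (by norm_num; rfl) (by simp) (by simp) (by simp) (by simp)
  · exact bider_of_vec _ _ 0 0 1 0 0 0 0 0 0 0 0
      (by simp) (by simp) (by simp) (by simp) (by simp) (by simp) (by simp) (by simp)
  · exact bider_of_vec _ _ 0 0 0 1 0 0 0 0 0 0 0
      (by simp) (by simp) (by simp) (by simp) (by simp) (by simp) (by simp) (by simp)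
  · exact bider_of_vec _ _ 0 0 0 0 1 0 0 0 0 0 0
      (by simp) (by simp) (by simp) (by simp) (by simp) (by simp) (by simp) (by simp)
  · exact bider_of_vec _ _ 0 0 0 0 0 1 0 0 0 0 0
      (by simp) (by simp) (by simp) (by simp) (by simp) (by simp) (by simp) (by simp)
  · exact bider_of_vec _ _ 0 0 0 0 0 0 1 0 0 0 0
      (by simp) (by simp) (by simp) (by simp) (by simp) (by simp) (by simp) (by simp)
  · exact bider_of_vec _ _ 0 0 0 0 0 0 0 1 0 0 0
      (by simp) (by simp) (by simp) (by simp) (by simp) (by simp) (by simp) (by simp)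
  · exact bider_of_vec _ _ 0 0 0 0 0 0 0 0 1 0 0
      (by simp) (by simp) (by simp) (by simp) (by simp) (by simp) (by simp) (by simp)
  · exact bider_of_vec _ _ 0 0 0 0 0 0 0 0 0 1 0
      (by simp) (by simp) (by simp) (by simp) (by simp) (by simp) (by simp) (by simp)
  · exact bider_of_vec _ _ 0 0 0 0 0 0 0 0 0 0 1
      (by simp) (by simp) (by simp) (by simp) (by simp) (by simp) (by simp) (by simp)
lemma sum11 {M : Type*} [AddCommMonoid M] (h : Fin 11 → M) :
    ∑ i, h i = h 0 + h 1 + h 2 + h 3 + h 4 + h 5 + h 6 + h 7 + h 8 + h 9 + h 10 := by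
  simp only [Fin.sum_univ_succ, Fin.sum_univ_zero, add_zero,
    show (Fin.succ 2 : Fin 11) = 3 from rfl,
    show ((Fin.succ 2).succ : Fin 11) = 4 from rfl,
    show ((Fin.succ 2).succ.succ : Fin 11) = 5 from rfl,
    show ((Fin.succ 2).succ.succ.succ : Fin 11) = 6 from rfl,
    show ((Fin.succ 2).succ.succ.succ.succ : Fin 11) = 7 from rfl,
    show ((Fin.succ 2).succ.succ.succ.succ.succ : Fin 11) = 8 from rfl,
    show ((Fin.succ 2).succ.succ.succ.succ.succ.succ : Fin 11) = 9 from rfl,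
    show ((Fin.succ 2).succ.succ.succ.succ.succ.succ.succ : Fin 11) = 10 from rfl]
  abel

lemma f_0 : f 0 = (mk4 ![e 0, 0, e 2, 0], mk4 ![e 0, 0, e 2, 0]) := rfl
lemma f_1 : f 1 = (mk4 ![0, e 1, e 2, (2:ℂ) • e 3], mk4 ![0, e 1, e 2, 0]) := rfl
lemma f_2 : f 2 = (mk4 ![0, e 0, 0, 0], mk4 ![0, e 0, 0, 0]) := rfl
lemma f_3 : f 3 = (mk4 ![e 2, 0, 0, 0], mk4 ![0, 0, 0, 0]) := rfl
lemma f_4 : f 4 = (mk4 ![e 3, 0, 0, 0], mk4 ![0, 0, 0, 0]) := rfl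
lemma f_5 : f 5 = (mk4 ![0, e 2, 0, 0], mk4 ![0, 0, 0, 0]) := rfl
lemma f_6 : f 6 = (mk4 ![0, e 3, 0, 0], mk4 ![0, 0, 0, 0]) := rfl
lemma f_7 : f 7 = (mk4 ![0, 0, 0, 0], mk4 ![e 2, 0, 0, 0]) := rfl
lemma f_8 : f 8 = (mk4 ![0, 0, 0, 0], mk4 ![e 3, 0, 0, 0]) := rfl
lemma f_9 : f 9 = (mk4 ![0, 0, 0, 0], mk4 ![0, e 2, 0, 0]) := rfl
lemma f_10 : f 10 = (mk4 ![0, 0, 0, 0], mk4 ![0, e 3, 0, 0]) := rfl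

lemma f_li : LinearIndependent ℂ f := by
  rw [Fintype.linearIndependent_iff]
  intro g hg
  have E : ∀ (j k : Fin 4),
      g 0 * ((f 0).1 (e j) k) + g 1 * ((f 1).1 (e j) k) + g 2 * ((f 2).1 (e j) k) +
      g 3 * ((f 3).1 (e j) k) + g 4 * ((f 4).1 (e j) k) + g 5 * ((f 5).1 (e j) k) +
      g 6 * ((f 6).1 (e j) k) + g 7 * ((f 7).1 (e j) k) + g 8 * ((f 8).1 (e j) k) +
      g 9 * ((f 9).1 (e j) k) + g 10 * ((f 10).1 (e j) k) = 0 := by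
    intro j k
    have h := congrArg (fun pr : (V →ₗ[ℂ] V) × (V →ₗ[ℂ] V) => pr.1 (e j) k) hg
    simp only [Prod.fst_sum, Prod.smul_fst, LinearMap.sum_apply, LinearMap.smul_apply,
      Finset.sum_apply, Pi.smul_apply, smul_eq_mul, Prod.fst_zero, LinearMap.zero_apply,
      Pi.zero_apply] at h
    rwa [sum11 (fun i => g i * ((f i).1 (e j) k))] at h
  have E2 : ∀ (j k : Fin 4),
      g 0 * ((f 0).2 (e j) k) + g 1 * ((f 1).2 (e j) k) + g 2 * ((f 2).2 (e j) k) +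
      g 3 * ((f 3).2 (e j) k) + g 4 * ((f 4).2 (e j) k) + g 5 * ((f 5).2 (e j) k) +
      g 6 * ((f 6).2 (e j) k) + g 7 * ((f 7).2 (e j) k) + g 8 * ((f 8).2 (e j) k) +
      g 9 * ((f 9).2 (e j) k) + g 10 * ((f 10).2 (e j) k) = 0 := by
    intro j k
    have h := congrArg (fun pr : (V →ₗ[ℂ] V) × (V →ₗ[ℂ] V) => pr.2 (e j) k) hg
    simp only [Prod.snd_sum, Prod.smul_snd, LinearMap.sum_apply, LinearMap.smul_apply,
      Finset.sum_apply, Pi.smul_apply, smul_eq_mul, Prod.snd_zero, LinearMap.zero_apply,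
      Pi.zero_apply] at h
    rwa [sum11 (fun i => g i * ((f i).2 (e j) k))] at h
  have h0 : g 0 = 0 := by
    have := E 0 0; simpa [f_0, f_1, f_2, f_3, f_4, f_5, f_6, f_7, f_8, f_9, f_10,
      mk4_apply, e_apply] using this
  have h1 : g 1 = 0 := by
    have := E 1 1; simpa [f_0, f_1, f_2, f_3, f_4, f_5, f_6, f_7, f_8, f_9, f_10,
      mk4_apply, e_apply] using this
  have h2 : g 2 = 0 := by
    have := E 1 0; simpa [f_0, f_1, f_2, f_3, f_4, f_5, f_6, f_7, f_8, f_9, f_10,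
      mk4_apply, e_apply] using this
  have h3 : g 3 = 0 := by
    have := E 0 2; simpa [f_0, f_1, f_2, f_3, f_4, f_5, f_6, f_7, f_8, f_9, f_10,
      mk4_apply, e_apply, h0] using this
  have h4 : g 4 = 0 := by
    have := E 0 3; simpa [f_0, f_1, f_2, f_3, f_4, f_5, f_6, f_7, f_8, f_9, f_10,
      mk4_apply, e_apply] using this
  have h5 : g 5 = 0 := by
    have := E 1 2; simpa [f_0, f_1, f_2, f_3, f_4, f_5, f_6, f_7, f_8, f_9, f_10,
      mk4_apply, e_apply, h1] using this
  have h6 : g 6 = 0 := by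
    have := E 1 3; simpa [f_0, f_1, f_2, f_3, f_4, f_5, f_6, f_7, f_8, f_9, f_10,
      mk4_apply, e_apply] using this
  have h7 : g 7 = 0 := by
    have := E2 0 2; simpa [f_0, f_1, f_2, f_3, f_4, f_5, f_6, f_7, f_8, f_9, f_10,
      mk4_apply, e_apply, h0] using this
  have h8 : g 8 = 0 := by
    have := E2 0 3; simpa [f_0, f_1, f_2, f_3, f_4, f_5, f_6, f_7, f_8, f_9, f_10,
      mk4_apply, e_apply] using this
  have h9 : g 9 = 0 := by
    have := E2 1 2; simpa [f_0, f_1, f_2, f_3, f_4, f_5, f_6, f_7, f_8, f_9, f_10,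
      mk4_apply, e_apply, h1] using this
  have h10 : g 10 = 0 := by
    have := E2 1 3; simpa [f_0, f_1, f_2, f_3, f_4, f_5, f_6, f_7, f_8, f_9, f_10,
      mk4_apply, e_apply] using this
  intro i
  fin_cases i <;> assumption

theorem biderivations_of_L18 :
    (∀ d D : V →ₗ[ℂ] V, IsBider d D ↔ ∃ a b m p q r s u v w z : ℂ,
      d (e 0) = a • e 0 + p • e 2 + q • e 3 ∧
      d (e 1) = m • e 0 + b • e 1 + r • e 2 + s • e 3 ∧
      d (e 2) = (a + b) • e 2 ∧
      d (e 3) = (2 * b) • e 3 ∧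
      D (e 0) = a • e 0 + u • e 2 + v • e 3 ∧
      D (e 1) = m • e 0 + b • e 1 + w • e 2 + z • e 3 ∧
      D (e 2) = (a + b) • e 2 ∧
      D (e 3) = 0) ∧
    ∃ S : Submodule ℂ ((V →ₗ[ℂ] V) × (V →ₗ[ℂ] V)),
      (S : Set ((V →ₗ[ℂ] V) × (V →ₗ[ℂ] V))) = {p | IsBider p.1 p.2} ∧
      Module.finrank ℂ S = 11 := by
  have hiff : ∀ d D : V →ₗ[ℂ] V, IsBider d D ↔ ∃ a b m p q r s u v w z : ℂ,
      d (e 0) = a • e 0 + p • e 2 + q • e 3 ∧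
      d (e 1) = m • e 0 + b • e 1 + r • e 2 + s • e 3 ∧
      d (e 2) = (a + b) • e 2 ∧
      d (e 3) = (2 * b) • e 3 ∧
      D (e 0) = a • e 0 + u • e 2 + v • e 3 ∧
      D (e 1) = m • e 0 + b • e 1 + w • e 2 + z • e 3 ∧
      D (e 2) = (a + b) • e 2 ∧
      D (e 3) = 0 := by
    intro d D
    constructor
    · exact params_of_bider d D
    · rintro ⟨a, b, m, p, q, r, s, u, v, w, z, h1, h2, h3, h4, h5, h6, h7, h8⟩
      exact bider_of_params d D a b m p q r s u v w z h1 h2 h3 h4 h5 h6 h7 h8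
  refine ⟨hiff, Submodule.span ℂ (Set.range f), ?_, ?_⟩
  · ext pr
    simp only [SetLike.mem_coe, Set.mem_setOf_eq]
    constructor
    · intro hmem
      induction hmem using Submodule.span_induction with
      | mem x h => obtain ⟨i, rfl⟩ := h; exact f_bider i
      | zero => exact bider_zero
      | add x y _ _ hx hy => exact bider_add hx hy
      | smul c x _ hx => exact bider_smul c hx
    · intro hb
      obtain ⟨a, b, m, p, q, r, s, u, v, w, z, h1, h2, h3, h4, h5, h6, h7, h8⟩ :=
        (hiff pr.1 pr.2).1 hb
      have hpr : pr = a • f 0 + b • f 1 + m • f 2 + p • f 3 + q • f 4 + r • f 5 +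
          s • f 6 + u • f 7 + v • f 8 + w • f 9 + z • f 10 := by
        refine Prod.ext ?_ ?_
        · apply B.ext; intro i
          rw [B_eq]
          fin_cases i <;>
            simp [Prod.fst_add, Prod.smul_fst, LinearMap.add_apply, LinearMap.smul_apply,
              f_0, f_1, f_2, f_3, f_4, f_5, f_6, f_7, f_8, f_9, f_10, mk4_apply,
              h1, h2, h3, h4] <;>
            module
        · apply B.ext; intro i
          rw [B_eq]
          fin_cases i <;>
            simp [Prod.snd_add, Prod.smul_snd, LinearMap.add_apply, LinearMap.smul_apply,
              f_0, f_1, f_2, f_3, f_4, f_5, f_6, f_7, f_8, f_9, f_10, mk4_apply,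
              h5, h6, h7, h8] <;>
            module
      rw [hpr]
      have hf : ∀ i : Fin 11, f i ∈ Submodule.span ℂ (Set.range f) :=
        fun i => Submodule.subset_span ⟨i, rfl⟩
      exact add_mem (add_mem (add_mem (add_mem (add_mem (add_mem (add_mem (add_mem
        (add_mem (add_mem (Submodule.smul_mem _ _ (hf 0)) (Submodule.smul_mem _ _ (hf 1)))
        (Submodule.smul_mem _ _ (hf 2))) (Submodule.smul_mem _ _ (hf 3)))
        (Submodule.smul_mem _ _ (hf 4))) (Submodule.smul_mem _ _ (hf 5)))
        (Submodule.smul_mem _ _ (hf 6))) (Submodule.smul_mem _ _ (hf 7)))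
        (Submodule.smul_mem _ _ (hf 8))) (Submodule.smul_mem _ _ (hf 9)))
        (Submodule.smul_mem _ _ (hf 10))
  · rw [finrank_span_eq_card f_li]
    simp
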